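/- No infinite Stewart word T(𝐭) contains a factor of the form xxyyxx, where x is a nonempty word over B and y is a (possibly empty) word over B. Equivalently, there do not exist 𝐭 over A, indices i ≥ 0, m ≥ 1, n ≥ 0 such that T(𝐭)[i+j] = T(𝐭)[i+j+m] for all 0 ≤ j < m, T(𝐭)[i+j] = T(𝐭)[i+j+2m+2n] for all 0 ≤ j < 2m, and T(𝐭)[i+2m+j] = T(𝐭)[i+2m+n+j] for all 0 ≤ j < n. -/

import Mathlib

/-- The alphabet B = {0, 1, ?}. -/
inductive B : Type
  | b0 : B
  | b1 : B
  | bq : B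
deriving DecidableEq, Inhabited, Repr

/-- The six Stewart patterns a = 01?, b = 10?, c = 0?1, d = 1?0, e = ?01, f = ?10. -/
inductive A : Type
  | a : A
  | b : A
  | c : A
  | d : A
  | e : A
  | f : A
deriving DecidableEq, Inhabited, Repr

open B in
/-- The length-3 word over B associated with a Stewart pattern. -/
def pat : A → List B
  | .a => [b0, b1, bq]
  | .b => [b1, b0, bq]
  | .c => [b0, bq, b1]
  | .d => [b1, bq, b0]
  | .e => [bq, b0, b1]
  | .f => [bq, b1, b0]

/-- Replace the occurrences of `?` in the first word, in order,
by the symbols of the second word. -/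
def fill : List B → List B → List B
  | [], _ => []
  | B.bq :: rest, s :: ss => s :: fill rest ss
  | B.bq :: rest, [] => B.bq :: fill rest []
  | x :: rest, ss => x :: fill rest ss

/-- Helper: the finite Stewart word of the *reverse* of `t`. -/
def Trev : List A → List B
  | [] => [B.bq]
  | g :: t => fill (Trev t ++ Trev t ++ Trev t) (pat g)

/-- The finite Stewart word `T(t)`, of length `3 ^ t.length`:
`T(ε) = ?`, and `T(t g)` is obtained from `T(t)T(t)T(t)` by replacing its
three occurrences of `?`, in order, by the three symbols of the pattern `g`. -/
def stewT (t : List A) : List B := Trev t.reverse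

/-- The length-`r` prefix of an infinite sequence of Stewart patterns, as a list. -/
def prefT (t : ℕ → A) (r : ℕ) : List A := List.ofFn (fun i : Fin r => t i)

/-- The infinite Stewart word `T(𝐭)`: its symbol at position `n` is the eventual
value of `T(t_0 ⋯ t_{r-1})[n]` as `r → ∞`. -/
noncomputable def stewInf (t : ℕ → A) (n : ℕ) : B :=
  Classical.epsilon (fun v : B => ∃ R : ℕ, ∀ r ≥ R, (stewT (prefT t r)).getD n B.bq = v)

/-- `w` occurs as a factor of the infinite word `x`. -/
def FactorOf (w : List B) (x : ℕ → B) : Prop :=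
  ∃ i : ℕ, ∀ j : ℕ, j < w.length → w.getD j B.bq = x (i + j)

/-- `w` has period `p ≥ 1`: `w[i] = w[i+p]` for all `0 ≤ i < |w| - p`. -/
def HasPeriod (w : List B) (p : ℕ) : Prop :=
  1 ≤ p ∧ ∀ i : ℕ, i + p < w.length → w.getD i B.bq = w.getD (i + p) B.bq

/-- The least period `per(w)` of a word. -/
noncomputable def leastPeriod (w : List B) : ℕ := sInf {p | HasPeriod w p}

/-- The exponent `exp(w) = |w| / per(w)` of a word. -/
noncomputable def expo (w : List B) : ℝ := (w.length : ℝ) / (leastPeriod w : ℝ)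

/-- The Hamming distance between two Stewart patterns: the number of positions
`p ∈ {0,1,2}` at which the length-3 words differ. -/
def ham (g h : A) : ℕ :=
  (Finset.univ.filter fun p : Fin 3 => (pat g).getD p B.bq ≠ (pat h).getD p B.bq).card

/-- `t` is ultimately periodic. -/
def UltPeriodic (t : ℕ → A) : Prop :=
  ∃ N : ℕ, ∃ p : ℕ, 1 ≤ p ∧ ∀ n ≥ N, t (n + p) = t n

/-- An infinite word `x` is 3-automatic: there is a finite automaton with output,
reading base-3 representations least-significant-digit first (trailing zeros
allowed), computing `x`. -/
def IsThreeAutomatic (x : ℕ → B) : Prop :=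
  ∃ (Q : Type) (_ : Finite Q) (δ : Q → Fin 3 → Q) (q0 : Q) (τ : Q → B),
    ∀ (r : ℕ) (e : Fin r → Fin 3),
      τ (List.foldl δ q0 (List.ofFn fun i => e i)) =
        x (∑ i : Fin r, (e i).val * 3 ^ (i : ℕ))

namespace SWaux

/-- The index of `?` in `pat g`. -/
def Dq : A → ℕ
  | .a | .b => 2
  | .c | .d => 1
  | .e | .f => 0

lemma Dq_lt (g : A) : Dq g < 3 := by cases g <;> simp [Dq]

lemma pat_length (g : A) : (pat g).length = 3 := by cases g <;> rfl

lemma pat_count (g : A) : (pat g).count B.bq = 1 := by cases g <;> rfl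

lemma pat_getD_Dq (g : A) : (pat g).getD (Dq g) B.bq = B.bq := by cases g <;> rfl

lemma pat_getD_ne_bq (g : A) (o : ℕ) (h1 : o < 3) (h2 : o ≠ Dq g) :
    (pat g).getD o B.bq ≠ B.bq := by
  interval_cases o <;> cases g <;> simp_all [pat, Dq]

lemma pat_ne (g : A) (o1 o2 : ℕ) (ho1 : o1 < 3) (ho2 : o2 < 3) (h : o1 ≠ o2)
    (h1 : o1 ≠ Dq g) (h2 : o2 ≠ Dq g) :
    (pat g).getD o1 B.bq ≠ (pat g).getD o2 B.bq := by
  interval_cases o1 <;> interval_cases o2 <;> cases g <;> simp_all [pat, Dq]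

/-- Digit-based value of the finite Stewart word: lowest digit first. -/
def Sval : List A → ℕ → B
  | [], _ => B.bq
  | g :: l, x => if x % 3 = Dq g then Sval l (x / 3) else (pat g).getD (x % 3) B.bq

lemma Sval_mod (l : List A) (x : ℕ) : Sval l (x % 3 ^ l.length) = Sval l x := by
  induction l generalizing x with
  | nil => rfl
  | cons g l ih =>
    have h3 : (3:ℕ) ^ (g :: l).length = 3 * 3 ^ l.length := by
      rw [List.length_cons, pow_succ]; ring
    have e1 : x % 3 ^ (g::l).length % 3 = x % 3 := by
      rw [h3]; exact Nat.mod_mod_of_dvd _ ⟨3 ^ l.length, rfl⟩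
    have e2 : x % 3 ^ (g::l).length / 3 = x / 3 % 3 ^ l.length := by
      rw [h3]; exact Nat.mod_mul_right_div_self x 3 (3 ^ l.length)
    simp only [Sval, e1, e2, ih]

lemma Sval_append (l : List A) (g : A) (x : ℕ) :
    Sval (l ++ [g]) x =
      if Sval l x = B.bq then
        (if x / 3 ^ l.length % 3 = Dq g then B.bq
         else (pat g).getD (x / 3 ^ l.length % 3) B.bq)
      else Sval l x := by
  induction l generalizing x with
  | nil => simp [Sval]
  | cons h l ih =>
    by_cases hc : x % 3 = Dq h
    · have hdd : x / 3 / 3 ^ l.length = x / 3 ^ (h :: l).length := by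
        rw [Nat.div_div_eq_div_mul]; congr 1
        rw [List.length_cons, pow_succ]; ring
      simp only [List.cons_append, Sval, if_pos hc, List.append_eq]
      rw [ih (x / 3), hdd]
    · have hne := pat_getD_ne_bq h (x % 3) (Nat.mod_lt _ (by norm_num)) hc
      simp only [List.cons_append, Sval, if_neg hc, if_neg hne]

lemma fill_length (T s : List B) : (fill T s).length = T.length := by
  induction T generalizing s with
  | nil => rfl
  | cons x T ih => cases x <;> cases s <;> simp [fill, ih]

lemma fill_getD (T s : List B) (y : ℕ) (hy : y < T.length) :
    (fill T s).getD y B.bq =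
      if T.getD y B.bq = B.bq then s.getD ((T.take y).count B.bq) B.bq
      else T.getD y B.bq := by
  induction T generalizing s y with
  | nil => simp at hy
  | cons x T ih =>
    cases y with
    | zero => cases x <;> cases s <;> simp [fill]
    | succ y =>
      have hy' : y < T.length := by simpa using hy
      cases x with
      | bq =>
        cases s with
        | nil =>
          simp only [fill, List.getD_cons_succ, ih [] y hy']
          by_cases hb : T.getD y B.bq = B.bq <;> simp [hb]
        | cons c ss =>
          simp only [fill, List.getD_cons_succ, ih ss y hy', List.take_succ_cons,
            List.count_cons, if_pos rfl]
          by_cases hb : T.getD y B.bq = B.bq <;> simp [hb]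
      | b0 =>
        simp only [fill, List.getD_cons_succ, ih s y hy', List.take_succ_cons,
          List.count_cons]
        by_cases hb : T.getD y B.bq = B.bq <;> simp [hb]
      | b1 =>
        simp only [fill, List.getD_cons_succ, ih s y hy', List.take_succ_cons,
          List.count_cons]
        by_cases hb : T.getD y B.bq = B.bq <;> simp [hb]

lemma count_fill (T s : List B) (h : T.count B.bq = s.length) :
    (fill T s).count B.bq = s.count B.bq := by
  induction T generalizing s with
  | nil =>
    cases s with
    | nil => rfl
    | cons c ss => simp at h
  | cons x T ih =>
    cases x with
    | bq =>
      cases s with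
      | nil => simp [List.count_cons] at h
      | cons c ss =>
        have h' : T.count B.bq = ss.length := by
          simp [List.count_cons] at h; omega
        simp [fill, List.count_cons, ih ss h']
    | b0 =>
      have h' : T.count B.bq = s.length := by simpa [List.count_cons] using h
      simp [fill, List.count_cons, ih s h']
    | b1 =>
      have h' : T.count B.bq = s.length := by simpa [List.count_cons] using h
      simp [fill, List.count_cons, ih s h']

lemma Trev_length (l : List A) : (Trev l).length = 3 ^ l.length := by
  induction l with
  | nil => rfl
  | cons g l ih =>
    show (fill (Trev l ++ Trev l ++ Trev l) (pat g)).length = _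
    rw [fill_length]
    simp [ih, List.length_append, pow_succ]; ring

lemma Trev_count (l : List A) : (Trev l).count B.bq = 1 := by
  induction l with
  | nil => rfl
  | cons g l ih =>
    show (fill (Trev l ++ Trev l ++ Trev l) (pat g)).count B.bq = 1
    rw [count_fill _ _ (by simp [List.count_append, ih, pat_length]), pat_count]

lemma count_take_of_getD (T : List B) (z : ℕ) (hz : z < T.length)
    (h1 : T.count B.bq = 1) (h2 : T.getD z B.bq = B.bq) :
    (T.take z).count B.bq = 0 := by
  have hsplit : (T.take z).count B.bq + (T.drop z).count B.bq = 1 := by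
    rw [← List.count_append, List.take_append_drop]; exact h1
  have hmem : B.bq ∈ T.drop z := by
    have hlen : 0 < (T.drop z).length := by simp [List.length_drop]; omega
    have : (T.drop z).getD 0 B.bq = T.getD z B.bq := by
      rw [List.getD_eq_getElem _ _ hlen, List.getD_eq_getElem _ _ hz]
      simp
    rw [h2] at this
    rw [← this, List.getD_eq_getElem _ _ hlen]
    exact List.getElem_mem _
  have : 0 < (T.drop z).count B.bq := List.count_pos_iff.mpr hmem
  omega

lemma Trev_getD (g : A) (l : List A) (b z : ℕ) (hb : b < 3) (hz : z < 3 ^ l.length) :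
    (Trev (g :: l)).getD (3 ^ l.length * b + z) B.bq =
      if (Trev l).getD z B.bq = B.bq then (pat g).getD b B.bq
      else (Trev l).getD z B.bq := by
  have hT : (Trev l).length = 3 ^ l.length := Trev_length l
  set T := Trev l with hTdef
  set L := 3 ^ l.length with hLdef
  have hzz : z < T.length := by omega
  have hTr : Trev (g :: l) = fill (T ++ T ++ T) (pat g) := rfl
  have hlen3 : (T ++ T ++ T).length = 3 * L := by simp [List.length_append]; omega
  have hxlt : L * b + z < (T ++ T ++ T).length := by rw [hlen3]; nlinarith
  rw [hTr, fill_getD _ _ _ hxlt]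
  interval_cases b
  · simp only [Nat.mul_zero, Nat.zero_add]
    have e1 : (T ++ T ++ T).getD z B.bq = T.getD z B.bq := by
      rw [List.getD_append _ _ _ _ (by simp [List.length_append]; omega),
          List.getD_append _ _ _ _ hzz]
    have e2 : (T ++ T ++ T).take z = T.take z := by
      rw [List.take_append, List.take_append,
          show z - (T ++ T).length = 0 by simp [List.length_append]; omega,
          show z - T.length = 0 by omega]
      simp
    rw [e1, e2]
    by_cases hbq : T.getD z B.bq = B.bq
    · rw [if_pos hbq, if_pos hbq, count_take_of_getD T z hzz (Trev_count l) hbq]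
    · rw [if_neg hbq, if_neg hbq]
  · have e1 : (T ++ T ++ T).getD (L * 1 + z) B.bq = T.getD z B.bq := by
      rw [List.getD_append _ _ _ _ (by simp [List.length_append]; omega),
          List.getD_append_right _ _ _ _ (by omega)]
      congr 1; omega
    have e2 : ((T ++ T ++ T).take (L * 1 + z)).count B.bq = 1 + (T.take z).count B.bq := by
      rw [List.take_append, List.take_append]
      have h1 : (T.take (L * 1 + z)) = T := List.take_of_length_le (by omega)
      have h2 : L * 1 + z - T.length = z := by omega
      have h3 : L * 1 + z - (T ++ T).length = 0 := by simp [List.length_append]; omega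
      rw [h1, h2, h3]
      simp [List.count_append, Trev_count l, ← hTdef]
      exact Trev_count l
    rw [e1, e2]
    by_cases hbq : T.getD z B.bq = B.bq
    · rw [if_pos hbq, if_pos hbq, count_take_of_getD T z hzz (Trev_count l) hbq]
    · rw [if_neg hbq, if_neg hbq]
  · have e1 : (T ++ T ++ T).getD (L * 2 + z) B.bq = T.getD z B.bq := by
      rw [List.getD_append_right _ _ _ _ (by simp [List.length_append]; omega)]
      congr 1; simp [List.length_append]; omega
    have e2 : ((T ++ T ++ T).take (L * 2 + z)).count B.bq = 2 + (T.take z).count B.bq := by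
      rw [List.take_append, List.take_append]
      have h1 : (T.take (L * 2 + z)) = T := List.take_of_length_le (by omega)
      have h1' : (T.take (L * 2 + z - T.length)) = T := List.take_of_length_le (by omega)
      have h3 : L * 2 + z - (T ++ T).length = z := by simp [List.length_append]; omega
      rw [h1, h1', h3]
      simp [List.count_append, Trev_count l, ← hTdef]
      have hcT : T.count B.bq = 1 := Trev_count l
      omega
    rw [e1, e2]
    by_cases hbq : T.getD z B.bq = B.bq
    · rw [if_pos hbq, if_pos hbq, count_take_of_getD T z hzz (Trev_count l) hbq]
    · rw [if_neg hbq, if_neg hbq]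

lemma Trev_getD_eq_Sval (l : List A) (x : ℕ) (hx : x < 3 ^ l.length) :
    (Trev l).getD x B.bq = Sval l.reverse x := by
  induction l generalizing x with
  | nil =>
    simp only [List.length_nil, pow_zero, Nat.lt_one_iff] at hx
    subst hx; rfl
  | cons g l ih =>
    have hL : (0:ℕ) < 3 ^ l.length := Nat.pow_pos (by norm_num)
    have hx3 : x < 3 ^ l.length * 3 := by
      have : (3:ℕ) ^ (g :: l).length = 3 ^ l.length * 3 := by
        rw [List.length_cons, pow_succ]
      omega
    have hb : x / 3 ^ l.length < 3 := Nat.div_lt_of_lt_mul hx3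
    have hz : x % 3 ^ l.length < 3 ^ l.length := Nat.mod_lt _ hL
    have hx' : x = 3 ^ l.length * (x / 3 ^ l.length) + x % 3 ^ l.length :=
      (Nat.div_add_mod x _).symm
    rw [hx', Trev_getD g l _ _ hb hz, ih _ hz]
    rw [List.reverse_cons, Sval_append]
    have hrl : l.reverse.length = l.length := List.length_reverse
    have e1 : Sval l.reverse (3 ^ l.length * (x / 3 ^ l.length) + x % 3 ^ l.length)
        = Sval l.reverse (x % 3 ^ l.length) := by
      conv_lhs => rw [← Sval_mod]
      rw [hrl, Nat.mul_add_mod, Nat.mod_eq_of_lt hz]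
    have e2 : (3 ^ l.length * (x / 3 ^ l.length) + x % 3 ^ l.length) / 3 ^ l.reverse.length % 3
        = x / 3 ^ l.length := by
      rw [hrl, Nat.mul_add_div hL, Nat.div_eq_of_lt hz, Nat.add_zero, Nat.mod_eq_of_lt hb]
    rw [e1, e2]
    by_cases hbq : Sval l.reverse (x % 3 ^ l.length) = B.bq
    · rw [if_pos hbq, if_pos hbq]
      by_cases hdq : x / 3 ^ l.length = Dq g
      · rw [if_pos hdq, hdq, pat_getD_Dq]
      · rw [if_neg hdq]
    · rw [if_neg hbq, if_neg hbq]

lemma stewT_getD (l : List A) (x : ℕ) (hx : x < 3 ^ l.length) :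
    (stewT l).getD x B.bq = Sval l x := by
  rw [stewT, Trev_getD_eq_Sval _ _ (by rwa [List.length_reverse]), List.reverse_reverse]

lemma prefT_length (t : ℕ → A) (r : ℕ) : (prefT t r).length = r := by simp [prefT]

lemma prefT_succ (t : ℕ → A) (r : ℕ) :
    prefT t (r + 1) = t 0 :: prefT (fun n => t (n + 1)) r := by
  rw [prefT, List.ofFn_succ]
  congr 1

lemma prefT_succ_last (t : ℕ → A) (r : ℕ) :
    prefT t (r + 1) = prefT t r ++ [t r] := by
  rw [prefT, List.ofFn_succ', List.concat_eq_append]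
  congr 1

lemma Sval_stable (t : ℕ → A) (x : ℕ) :
    ∃ v R, ∀ r, R ≤ r → Sval (prefT t r) x = v := by
  by_cases h : ∃ r0, Sval (prefT t r0) x ≠ B.bq
  · obtain ⟨r0, h0⟩ := h
    refine ⟨Sval (prefT t r0) x, r0, ?_⟩
    intro r hr
    induction r, hr using Nat.le_induction with
    | base => rfl
    | succ r hr ihr =>
      rw [prefT_succ_last, Sval_append, ihr, if_neg h0]
  · push_neg at h
    exact ⟨B.bq, 0, fun r _ => h r⟩

lemma stewInf_eq (t : ℕ → A) (x : ℕ) (v : B) (R : ℕ)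
    (h : ∀ r, R ≤ r → Sval (prefT t r) x = v) : stewInf t x = v := by
  have key : ∀ r, max R x ≤ r → (stewT (prefT t r)).getD x B.bq = v := by
    intro r hr
    have hxr : x < 3 ^ r :=
      lt_of_lt_of_le (Nat.lt_pow_self (by norm_num : 1 < 3) : x < 3 ^ x)
        (Nat.pow_le_pow_right (by norm_num) (le_trans (le_max_right R x) hr))
    rw [stewT_getD _ _ (by rwa [prefT_length]), h r (le_trans (le_max_left R x) hr)]
  set p := fun v : B => ∃ R : ℕ, ∀ r ≥ R, (stewT (prefT t r)).getD x B.bq = v with hp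
  have hex : ∃ v', p v' := ⟨v, max R x, key⟩
  have hspec := Classical.epsilon_spec hex
  obtain ⟨R', hR'⟩ := hspec
  show Classical.epsilon p = v
  have hq1 := hR' (max R' (max R x)) (le_max_left _ _)
  have hq2 := key (max R' (max R x)) (le_max_right _ _)
  rw [← hq1]
  exact hq2

lemma stewInf_of_ne (t : ℕ → A) (x : ℕ) (h : x % 3 ≠ Dq (t 0)) :
    stewInf t x = (pat (t 0)).getD (x % 3) B.bq := by
  apply stewInf_eq t x _ 1
  intro r hr
  obtain ⟨r', rfl⟩ : ∃ r', r = r' + 1 := ⟨r - 1, by omega⟩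
  rw [prefT_succ]
  simp [Sval, h]

lemma stewInf_div (t : ℕ → A) (x : ℕ) (h : x % 3 = Dq (t 0)) :
    stewInf t x = stewInf (fun n => t (n + 1)) (x / 3) := by
  obtain ⟨v, R, hv⟩ := Sval_stable (fun n => t (n + 1)) (x / 3)
  rw [stewInf_eq (fun n => t (n + 1)) _ v R hv]
  apply stewInf_eq t x v (R + 1)
  intro r hr
  obtain ⟨r', rfl⟩ : ∃ r', r = r' + 1 := ⟨r - 1, by omega⟩
  rw [prefT_succ]
  simp only [Sval, if_pos h]
  exact hv r' (by omega)

lemma KF (t : ℕ → A) (x y : ℕ) (hx : x % 3 ≠ Dq (t 0)) (hy : y % 3 ≠ Dq (t 0))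
    (hxy : x % 3 ≠ y % 3) : stewInf t x ≠ stewInf t y := by
  rw [stewInf_of_ne t x hx, stewInf_of_ne t y hy]
  exact pat_ne _ _ _ (Nat.mod_lt _ (by norm_num)) (Nat.mod_lt _ (by norm_num)) hxy hx hy

lemma pairKF (t : ℕ → A) (x y : ℕ) (hxy : x % 3 ≠ y % 3)
    (he : stewInf t x = stewInf t y) : x % 3 = Dq (t 0) ∨ y % 3 = Dq (t 0) := by
  by_contra hc
  push_neg at hc
  exact KF t x y hc.1 hc.2 hxy he

lemma windows (t : ℕ → A) (a p : ℕ) (hp : p % 3 ≠ 0)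
    (h : ∀ x, a ≤ x → x < a + 3 → stewInf t x = stewInf t (x + p)) : False := by
  have hj := Dq_lt (t 0)
  have hex : ∃ x, a ≤ x ∧ x < a + 3 ∧ x % 3 ≠ Dq (t 0) ∧ (x + p) % 3 ≠ Dq (t 0) := by
    have h1 : a % 3 = 0 ∨ a % 3 = 1 ∨ a % 3 = 2 := by omega
    have h2 : p % 3 = 1 ∨ p % 3 = 2 := by omega
    have h3 : Dq (t 0) = 0 ∨ Dq (t 0) = 1 ∨ Dq (t 0) = 2 := by omega
    rcases h1 with h1|h1|h1 <;> rcases h2 with h2|h2 <;> rcases h3 with h3|h3|h3 <;>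
      first
        | exact ⟨a, by omega⟩
        | exact ⟨a + 1, by omega⟩
        | exact ⟨a + 2, by omega⟩
  obtain ⟨x, hx1, hx2, hx3, hx4⟩ := hex
  exact KF t x (x + p) hx3 hx4 (by omega) (h x hx1 hx2)

lemma main : ∀ m : ℕ, ∀ (t : ℕ → A) (i n : ℕ), 1 ≤ m →
    (∀ j < m, stewInf t (i + j) = stewInf t (i + j + m)) →
    (∀ j < 2 * m, stewInf t (i + j) = stewInf t (i + j + 2 * m + 2 * n)) →
    (∀ j < n, stewInf t (i + 2 * m + j) = stewInf t (i + 2 * m + n + j)) →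
    False := by
  intro m
  induction m using Nat.strong_induction_on with
  | _ m IH =>
  intro t i n hm h1 h2 h3
  have hj := Dq_lt (t 0)
  have hn3 : n % 3 = 0 ∨ n < 3 := by
    by_contra hc
    push_neg at hc
    obtain ⟨hc1, hc2⟩ := hc
    refine windows t (i + 2 * m) n hc1 (fun x hx1 hx2 => ?_)
    have h := h3 (x - (i + 2 * m)) (by omega)
    rw [show i + 2 * m + (x - (i + 2 * m)) = x by omega,
        show i + 2 * m + n + (x - (i + 2 * m)) = x + n by omega] at h
    exact h
  rcases Nat.lt_or_ge m 2 with hm2 | hm2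
  · -- m = 1
    obtain rfl : m = 1 := by omega
    have e1 : stewInf t i = stewInf t (i + 1) := by
      have := h1 0 (by omega)
      rwa [show i + 0 = i by omega, show i + 0 + 1 = i + 1 by omega] at this
    rcases Nat.lt_or_ge n 3 with hn | hn
    on_goal 2 =>
      -- n ≥ 3 hence n % 3 = 0
      have hn0 : n % 3 = 0 := by omega
      have e3 : stewInf t i = stewInf t (i + 2 + 2 * n) := by
        have := h2 0 (by omega)
        rwa [show i + 0 = i by omega, show i + 0 + 2 * 1 + 2 * n = i + 2 + 2 * n by omega]
          at this
      have e5 : stewInf t (i + 1) = stewInf t (i + 2 + 2 * n) := e1.symm.trans e3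
      have d1 := pairKF t i (i + 1) (by omega) e1
      have d3 := pairKF t i (i + 2 + 2 * n) (by omega) e3
      have d5 := pairKF t (i + 1) (i + 2 + 2 * n) (by omega) e5
      omega
    · interval_cases n
      · -- n = 0
        have e3 : stewInf t i = stewInf t (i + 2) := by
          have := h2 0 (by omega)
          rwa [show i + 0 = i by omega, show i + 0 + 2 * 1 + 2 * 0 = i + 2 by omega] at this
        have e5 : stewInf t (i + 1) = stewInf t (i + 2) := e1.symm.trans e3
        have d1 := pairKF t i (i + 1) (by omega) e1
        have d3 := pairKF t i (i + 2) (by omega) e3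
        have d5 := pairKF t (i + 1) (i + 2) (by omega) e5
        omega
      · -- n = 1
        have e2 : stewInf t (i + 2) = stewInf t (i + 3) := by
          have := h3 0 (by omega)
          rwa [show i + 2 * 1 + 0 = i + 2 by omega, show i + 2 * 1 + 1 + 0 = i + 3 by omega]
            at this
        have g1 : stewInf t i = stewInf t (i + 4) := by
          have := h2 0 (by omega)
          rwa [show i + 0 = i by omega, show i + 0 + 2 * 1 + 2 * 1 = i + 4 by omega] at this
        have g2 : stewInf t (i + 1) = stewInf t (i + 5) := by
          have := h2 1 (by omega)
          rwa [show i + 1 + 2 * 1 + 2 * 1 = i + 5 by omega] at this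
        have e4 : stewInf t (i + 4) = stewInf t (i + 5) :=
          g1.symm.trans (e1.trans g2)
        have d1 := pairKF t i (i + 1) (by omega) e1
        have d2 := pairKF t (i + 2) (i + 3) (by omega) e2
        have d4 := pairKF t (i + 4) (i + 5) (by omega) e4
        omega
      · -- n = 2
        have f1 : stewInf t (i + 2) = stewInf t (i + 4) := by
          have := h3 0 (by omega)
          rwa [show i + 2 * 1 + 0 = i + 2 by omega, show i + 2 * 1 + 2 + 0 = i + 4 by omega]
            at this
        have f2 : stewInf t (i + 3) = stewInf t (i + 5) := by
          have := h3 1 (by omega)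
          rwa [show i + 2 * 1 + 1 = i + 3 by omega, show i + 2 * 1 + 2 + 1 = i + 5 by omega]
            at this
        have g1 : stewInf t i = stewInf t (i + 6) := by
          have := h2 0 (by omega)
          rwa [show i + 0 = i by omega, show i + 0 + 2 * 1 + 2 * 2 = i + 6 by omega] at this
        have g2 : stewInf t (i + 1) = stewInf t (i + 7) := by
          have := h2 1 (by omega)
          rwa [show i + 1 + 2 * 1 + 2 * 2 = i + 7 by omega] at this
        have e4 : stewInf t (i + 6) = stewInf t (i + 7) :=
          g1.symm.trans (e1.trans g2)
        have d1 := pairKF t i (i + 1) (by omega) e1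
        have d2 := pairKF t (i + 2) (i + 4) (by omega) f1
        have d3 := pairKF t (i + 3) (i + 5) (by omega) f2
        have d4 := pairKF t (i + 6) (i + 7) (by omega) e4
        omega
  · -- m ≥ 2
    have hq3 : (2 * m + 2 * n) % 3 = 0 := by
      by_contra hc
      refine windows t i (2 * m + 2 * n) hc (fun x hx1 hx2 => ?_)
      have h := h2 (x - i) (by omega)
      rwa [show i + (x - i) = x by omega,
          show x + 2 * m + 2 * n = x + (2 * m + 2 * n) by omega] at h
    rcases Nat.lt_or_ge m 3 with hm3 | hm3
    · -- m = 2, forces n = 1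
      obtain rfl : m = 2 := by omega
      obtain rfl : n = 1 := by omega
      have r1 : stewInf t i = stewInf t (i + 2) := by
        have := h1 0 (by omega)
        rwa [show i + 0 = i by omega, show i + 0 + 2 = i + 2 by omega] at this
      have r2 : stewInf t (i + 1) = stewInf t (i + 3) := by
        have := h1 1 (by omega)
        rwa [show i + 1 + 2 = i + 3 by omega] at this
      have r5 : stewInf t (i + 4) = stewInf t (i + 5) := by
        have := h3 0 (by omega)
        rwa [show i + 2 * 2 + 0 = i + 4 by omega, show i + 2 * 2 + 1 + 0 = i + 5 by omega]
          at this
      have d1 := pairKF t i (i + 2) (by omega) r1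
      have d2 := pairKF t (i + 1) (i + 3) (by omega) r2
      have d5 := pairKF t (i + 4) (i + 5) (by omega) r5
      omega
    · -- m ≥ 3 : desubstitute
      have hmm3 : m % 3 = 0 := by
        by_contra hc
        refine windows t i m hc (fun x hx1 hx2 => ?_)
        have h := h1 (x - i) (by omega)
        rwa [show i + (x - i) = x by omega] at h
      have hnn3 : n % 3 = 0 := by omega
      obtain ⟨m', rfl⟩ : ∃ m', m = 3 * m' := ⟨m / 3, by omega⟩
      obtain ⟨n', rfl⟩ : ∃ n', n = 3 * n' := ⟨n / 3, by omega⟩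
      obtain ⟨i', hii1, hii2⟩ :
          ∃ i', i ≤ 3 * i' + Dq (t 0) ∧ 3 * i' + Dq (t 0) ≤ i + 2 :=
        ⟨(i + 2 - Dq (t 0)) / 3, by omega, by omega⟩
      have key : ∀ k, stewInf t (3 * k + Dq (t 0)) = stewInf (fun n => t (n + 1)) k := by
        intro k
        rw [stewInf_div t _ (by omega)]
        congr 1
        omega
      refine IH m' (by omega) (fun n => t (n + 1)) i' n' (by omega) ?_ ?_ ?_
      · intro k hk
        have hx := h1 (3 * (i' + k) + Dq (t 0) - i) (by omega)
        rw [show i + (3 * (i' + k) + Dq (t 0) - i) = 3 * (i' + k) + Dq (t 0) by omega,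
            show 3 * (i' + k) + Dq (t 0) + 3 * m' = 3 * (i' + k + m') + Dq (t 0) by omega,
            key, key] at hx
        exact hx
      · intro k hk
        have hx := h2 (3 * (i' + k) + Dq (t 0) - i) (by omega)
        rw [show i + (3 * (i' + k) + Dq (t 0) - i) = 3 * (i' + k) + Dq (t 0) by omega,
            show 3 * (i' + k) + Dq (t 0) + 2 * (3 * m') + 2 * (3 * n')
              = 3 * (i' + k + 2 * m' + 2 * n') + Dq (t 0) by omega,
            key, key] at hx
        exact hx
      · intro k hk
        have hx := h3 (3 * (i' + 2 * m' + k) + Dq (t 0) - (i + 2 * (3 * m'))) (by omega)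
        rw [show i + 2 * (3 * m') + (3 * (i' + 2 * m' + k) + Dq (t 0) - (i + 2 * (3 * m')))
              = 3 * (i' + 2 * m' + k) + Dq (t 0) by omega,
            show i + 2 * (3 * m') + 3 * n'
                + (3 * (i' + 2 * m' + k) + Dq (t 0) - (i + 2 * (3 * m')))
              = 3 * (i' + 2 * m' + n' + k) + Dq (t 0) by omega,
            key, key] at hx
        exact hx

end SWaux


theorem stmt_5 :
    ¬ ∃ (t : ℕ → A) (i m n : ℕ), 1 ≤ m ∧
      (∀ j < m, stewInf t (i + j) = stewInf t (i + j + m)) ∧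
      (∀ j < 2 * m, stewInf t (i + j) = stewInf t (i + j + 2 * m + 2 * n)) ∧
      (∀ j < n, stewInf t (i + 2 * m + j) = stewInf t (i + 2 * m + n + j)) := by
  rintro ⟨t, i, m, n, hm, h1, h2, h3⟩
  exact SWaux.main m t i n hm h1 h2 h3
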